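/- For any probability measure P on ℝ^p, the supremum L_G = sup_{θ ∈ Θ_G} E_P[log ψ_δ(x,θ)] over the population-level constrained parameter space is strictly greater than -∞. -/

import Mathlib

open Real Matrix Filter Topology MeasureTheory

/-- smallest eigenvalue (infimum of the spectrum) of a real matrix -/
noncomputable def lamMin {p : ℕ} (A : Matrix (Fin p) (Fin p) ℝ) : ℝ := sInf (spectrum ℝ A)

/-- largest eigenvalue (supremum of the spectrum) of a real matrix -/
noncomputable def lamMax {p : ℕ} (A : Matrix (Fin p) (Fin p) ℝ) : ℝ := sSup (spectrum ℝ A)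

/-- The `p`-dimensional Gaussian density with mean `μ` and covariance matrix `S`. -/
noncomputable def gauss {p : ℕ} (x μ : Fin p → ℝ) (S : Matrix (Fin p) (Fin p) ℝ) : ℝ :=
  (2 * π) ^ (-(p : ℝ) / 2) * S.det ^ (-(1 : ℝ) / 2) *
    Real.exp (-((x - μ) ⬝ᵥ (S⁻¹ *ᵥ (x - μ))) / 2)

/-- parameter vector θ = (π₀, (π_j), (μ_j), (Σ_j)) of a Gaussian mixture with
improper uniform (noise) component -/
abbrev Param (p G : ℕ) :=
  ℝ × (Fin G → ℝ) × (Fin G → (Fin p → ℝ)) × (Fin G → Matrix (Fin p) (Fin p) ℝ)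

/-- noise proportion π₀ -/
def pi0 {p G : ℕ} (θ : Param p G) : ℝ := θ.1

/-- mixture proportions π_j -/
def wt {p G : ℕ} (θ : Param p G) : Fin G → ℝ := θ.2.1

/-- component means μ_j -/
def mean {p G : ℕ} (θ : Param p G) : Fin G → Fin p → ℝ := θ.2.2.1

/-- component covariance matrices Σ_j -/
def covm {p G : ℕ} (θ : Param p G) : Fin G → Matrix (Fin p) (Fin p) ℝ := θ.2.2.2

/-- the improper pseudo-density ψ_δ(x, θ) = π₀δ + Σ_j π_j φ(x; μ_j, Σ_j) -/
noncomputable def psi {p G : ℕ} (δ : ℝ) (θ : Param p G) (x : Fin p → ℝ) : ℝ :=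
  pi0 θ * δ + ∑ j, wt θ j * gauss x (mean θ j) (covm θ j)

/-- λ_min(θ): smallest eigenvalue among all component covariances -/
noncomputable def lamMinP {p G : ℕ} (θ : Param p G) : ℝ := ⨅ j, lamMin (covm θ j)

/-- λ_max(θ): largest eigenvalue among all component covariances -/
noncomputable def lamMaxP {p G : ℕ} (θ : Param p G) : ℝ := ⨆ j, lamMax (covm θ j)

/-- basic parameter constraints: proportions nonnegative summing to one,
positive definite covariances, eigenratio λ_max(θ)/λ_min(θ) ≤ γ -/
def baseOK {p G : ℕ} (γ : ℝ) (θ : Param p G) : Prop :=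
  0 ≤ pi0 θ ∧ (∀ j, 0 ≤ wt θ j) ∧ pi0 θ + ∑ j, wt θ j = 1 ∧
    (∀ j, (covm θ j).PosDef) ∧ lamMaxP θ ≤ γ * lamMinP θ

/-- the finite-sample constrained parameter space Θ (eigenratio bound and
estimated noise proportion (1/n) Σ_i τ₀(x_i, θ) ≤ π_max) -/
def ThetaN {p G n : ℕ} (δ γ πmax : ℝ) (x : Fin n → Fin p → ℝ) : Set (Param p G) :=
  {θ | baseOK γ θ ∧ (1 / n : ℝ) * ∑ i, pi0 θ * δ / psi δ θ (x i) ≤ πmax}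

/-- the improper pseudo-log-likelihood l_n(θ) = (1/n) Σ_i log ψ_δ(x_i, θ) -/
noncomputable def ln {p G n : ℕ} (δ : ℝ) (x : Fin n → Fin p → ℝ) (θ : Param p G) : ℝ :=
  (1 / n : ℝ) * ∑ i, Real.log (psi δ θ (x i))

/-- the population constrained parameter space Θ_G (noise constraint
E_P[π₀δ/ψ_δ(x,θ)] ≤ π_max, eigenratio constraint, and well-definedness of L) -/
def ThetaG {p : ℕ} (G : ℕ) (P : Measure (Fin p → ℝ)) (δ γ πmax : ℝ) : Set (Param p G) :=
  {θ | baseOK γ θ ∧ Integrable (fun x => Real.log (psi δ θ x)) P ∧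
    ∫ x, pi0 θ * δ / psi δ θ x ∂P ≤ πmax}

/-- the population pseudo-log-likelihood L(θ) = E_P[log ψ_δ(x, θ)] -/
noncomputable def LL {p G : ℕ} (P : Measure (Fin p → ℝ)) (δ : ℝ) (θ : Param p G) : ℝ :=
  ∫ x, Real.log (psi δ θ x) ∂P

/-- assumption A1: P puts mass < 1 - π_max on every set of G points -/
def A1 {p : ℕ} (P : Measure (Fin p → ℝ)) (πmax : ℝ) (G : ℕ) : Prop :=
  ∀ y : Fin G → Fin p → ℝ, P (Set.range y) < ENNReal.ofReal (1 - πmax)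

/-! Take every component to be the standard Gaussian φ, with noise weight `a` and
component weights `(1 - a) / G`. Then `ψ_δ = a δ + (1 - a) φ` lies between `a δ` and
`a δ + (2π)^(-p/2)`, so `log ψ_δ` is bounded below and integrable, while the noise fraction
`a δ / ψ_δ ≤ 1` tends to `0` pointwise as `a → 0⁺`; by dominated convergence its expectation
drops below `π_max` for small `a`. -/

section Gaussian

variable {p : ℕ}

theorem continuous_gauss (μ : Fin p → ℝ) (S : Matrix (Fin p) (Fin p) ℝ) :
    Continuous fun x => gauss x μ S := by
  unfold gauss
  fun_prop

theorem gauss_pos {S : Matrix (Fin p) (Fin p) ℝ} (hS : 0 < S.det) (x μ : Fin p → ℝ) :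
    0 < gauss x μ S := by
  unfold gauss
  have : (0 : ℝ) < (2 * π) ^ (-(p : ℝ) / 2) := by positivity
  positivity

theorem gauss_le {S : Matrix (Fin p) (Fin p) ℝ} (hS : S.PosSemidef) (x μ : Fin p → ℝ) :
    gauss x μ S ≤ (2 * π) ^ (-(p : ℝ) / 2) * S.det ^ (-(1 : ℝ) / 2) := by
  have hq : 0 ≤ (x - μ) ⬝ᵥ (S⁻¹ *ᵥ (x - μ)) := by
    simpa using hS.inv.dotProduct_mulVec_nonneg (x - μ)
  have hc : 0 ≤ (2 * π) ^ (-(p : ℝ) / 2) * S.det ^ (-(1 : ℝ) / 2) := by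
    have := hS.det_nonneg
    positivity
  exact mul_le_of_le_one_right hc (Real.exp_le_one_iff.2 (by linarith))

end Gaussian

section Mixture

variable {p G : ℕ}

theorem continuous_psi (δ : ℝ) (θ : Param p G) : Continuous (psi δ θ) := by
  unfold psi
  have := fun j => continuous_gauss (mean θ j) (covm θ j)
  fun_prop

theorem pi0_mul_le_psi {θ : Param p G} (hw : ∀ j, 0 ≤ wt θ j)
    (hS : ∀ j, (covm θ j).PosDef) (δ : ℝ) (x : Fin p → ℝ) :
    pi0 θ * δ ≤ psi δ θ x :=
  le_add_of_nonneg_right <| Finset.sum_nonneg fun j _ =>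
    mul_nonneg (hw j) (gauss_pos (hS j).det_pos x _).le

theorem psi_le {θ : Param p G} (hw : ∀ j, 0 ≤ wt θ j)
    (hS : ∀ j, (covm θ j).PosSemidef) (δ : ℝ) (x : Fin p → ℝ) :
    psi δ θ x ≤ pi0 θ * δ +
      ∑ j, wt θ j * ((2 * π) ^ (-(p : ℝ) / 2) * (covm θ j).det ^ (-(1 : ℝ) / 2)) :=
  add_le_add_right (Finset.sum_le_sum fun j _ =>
    mul_le_mul_of_nonneg_left (gauss_le (hS j) x _) (hw j)) _

end Mixture

section Integrals

variable {α : Type*} [MeasurableSpace α] {μ : Measure α} [IsFiniteMeasure μ]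

theorem integrable_log_of_mem_Icc {f : α → ℝ} (hf : Measurable f) {m M : ℝ} (hm : 0 < m)
    (hfm : ∀ x, f x ∈ Set.Icc m M) : Integrable (fun x => Real.log (f x)) μ := by
  refine .of_bound hf.log.aestronglyMeasurable (max |Real.log m| |Real.log M|)
    (ae_of_all _ fun x => ?_)
  have hlo : Real.log m ≤ Real.log (f x) := Real.log_le_log hm (hfm x).1
  have hhi : Real.log (f x) ≤ Real.log M := Real.log_le_log (hm.trans_le (hfm x).1) (hfm x).2
  rw [Real.norm_eq_abs, abs_le]
  constructor
  · linarith [neg_abs_le (Real.log m), le_max_left |Real.log m| |Real.log M|]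
  · linarith [le_abs_self (Real.log M), le_max_right |Real.log m| |Real.log M|]

theorem tendsto_integral_noise_ratio {g : α → ℝ} (hg : Measurable g) (hpos : ∀ x, 0 < g x)
    {δ : ℝ} (hδ : 0 ≤ δ) :
    Tendsto (fun a => ∫ x, a * δ / (a * δ + (1 - a) * g x) ∂μ) (𝓝[>] 0) (𝓝 0) := by
  have hmeas : ∀ a : ℝ, AEStronglyMeasurable (fun x => a * δ / (a * δ + (1 - a) * g x)) μ :=
    fun a => (measurable_const.div
      (measurable_const.add (measurable_const.mul hg))).aestronglyMeasurable
  have hbound : ∀ᶠ a in 𝓝[>] (0 : ℝ),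
      ∀ᵐ x ∂μ, ‖a * δ / (a * δ + (1 - a) * g x)‖ ≤ (1 : ℝ) := by
    filter_upwards [Ioo_mem_nhdsGT one_pos] with a ha
    refine ae_of_all _ fun x => ?_
    have hnum : 0 ≤ a * δ := mul_nonneg ha.1.le hδ
    have hrest : 0 ≤ (1 - a) * g x := mul_nonneg (by linarith [ha.2]) (hpos x).le
    rw [Real.norm_eq_abs, abs_of_nonneg (div_nonneg hnum (by linarith))]
    exact div_le_one_of_le₀ (by linarith) (by linarith)
  have hlim : ∀ᵐ x ∂μ,
      Tendsto (fun a : ℝ => a * δ / (a * δ + (1 - a) * g x)) (𝓝[>] 0) (𝓝 0) := by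
    refine ae_of_all _ fun x => tendsto_nhdsWithin_of_tendsto_nhds ?_
    have hcont : ContinuousAt (fun a : ℝ => a * δ / (a * δ + (1 - a) * g x)) 0 :=
      ContinuousAt.div (by fun_prop) (by fun_prop) (by simp [(hpos x).ne'])
    simpa using hcont.tendsto
  simpa using tendsto_integral_filter_of_dominated_convergence (fun _ => (1 : ℝ))
    (.of_forall hmeas) hbound (integrable_const 1) hlim

end Integrals

theorem integrable_log_psi {p G : ℕ} {P : Measure (Fin p → ℝ)} [IsFiniteMeasure P]
    {δ : ℝ} (hδ : 0 < δ) {θ : Param p G} (hπ : 0 < pi0 θ) (hw : ∀ j, 0 ≤ wt θ j)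
    (hS : ∀ j, (covm θ j).PosDef) : Integrable (fun x => Real.log (psi δ θ x)) P :=
  integrable_log_of_mem_Icc (continuous_psi δ θ).measurable (mul_pos hπ hδ) fun x =>
    ⟨pi0_mul_le_psi hw hS δ x, psi_le hw (fun j => (hS j).posSemidef) δ x⟩

theorem lamMin_one {p : ℕ} [Nonempty (Fin p)] : lamMin (1 : Matrix (Fin p) (Fin p) ℝ) = 1 := by
  rw [lamMin, spectrum.one_eq, csInf_singleton]

theorem lamMax_one {p : ℕ} [Nonempty (Fin p)] : lamMax (1 : Matrix (Fin p) (Fin p) ℝ) = 1 := by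
  rw [lamMax, spectrum.one_eq, csSup_singleton]

section EqualMix

variable {p G : ℕ}

variable (G) in
noncomputable def equalMix (a : ℝ) (μ : Fin p → ℝ) (S : Matrix (Fin p) (Fin p) ℝ) :
    Param p G :=
  (a, fun _ => (1 - a) / G, fun _ => μ, fun _ => S)

@[simp] theorem pi0_equalMix (a : ℝ) (μ : Fin p → ℝ) (S : Matrix (Fin p) (Fin p) ℝ) :
    pi0 (equalMix G a μ S) = a := rfl

variable [NeZero G]

theorem psi_equalMix (a δ : ℝ) (μ x : Fin p → ℝ) (S : Matrix (Fin p) (Fin p) ℝ) :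
    psi δ (equalMix G a μ S) x = a * δ + (1 - a) * gauss x μ S := by
  simp only [psi, pi0, wt, mean, covm, equalMix, Finset.sum_const, Finset.card_univ,
    Fintype.card_fin, nsmul_eq_mul]
  field_simp [NeZero.ne G]

theorem baseOK_equalMix {γ a : ℝ} (ha0 : 0 ≤ a) (ha1 : a ≤ 1) (μ : Fin p → ℝ)
    {S : Matrix (Fin p) (Fin p) ℝ} (hS : S.PosDef) (hγ : lamMax S ≤ γ * lamMin S) :
    baseOK γ (equalMix G a μ S) := by
  refine ⟨ha0, fun _ => div_nonneg (by linarith) G.cast_nonneg, ?_, fun _ => hS, ?_⟩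
  · simp only [pi0, wt, equalMix, Finset.sum_const, Finset.card_univ, Fintype.card_fin,
      nsmul_eq_mul]
    field_simp [NeZero.ne G]
    ring
  · simpa only [lamMaxP, lamMinP, covm, equalMix, ciSup_const, ciInf_const] using hγ

end EqualMix

theorem stmt12_general {p G : ℕ} (hp : 0 < p) (hG : 0 < G)
    (P : Measure (Fin p → ℝ)) [IsProbabilityMeasure P]
    (δ γ πmax : ℝ) (hδ : 0 < δ) (hγ : 1 ≤ γ) (hπ0 : 0 < πmax) :
    ∃ θ ∈ ThetaG G P δ γ πmax, ∃ b : ℝ, ∀ x, b ≤ Real.log (psi δ θ x) := by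
  have : Nonempty (Fin p) := ⟨⟨0, hp⟩⟩
  have : NeZero G := ⟨hG.ne'⟩
  have hφ : ∀ x, 0 < gauss x 0 (1 : Matrix (Fin p) (Fin p) ℝ) :=
    fun x => gauss_pos (by simp) x 0
  obtain ⟨a, hsmall, ha0, ha1⟩ : ∃ a : ℝ,
      ∫ x, a * δ / (a * δ + (1 - a) * gauss x 0 1) ∂P < πmax ∧ 0 < a ∧ a < 1 :=
    (((tendsto_integral_noise_ratio (continuous_gauss 0 1).measurable hφ hδ.le).eventually
      (gt_mem_nhds hπ0)).and (Ioo_mem_nhdsGT one_pos)).exists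
  have hθ : baseOK γ (equalMix G a 0 1) :=
    baseOK_equalMix ha0.le ha1.le 0 Matrix.PosDef.one <| by
      rw [lamMax_one (p := p), lamMin_one (p := p)]
      linarith
  have ⟨_, hw, _, hS, _⟩ := hθ
  refine ⟨equalMix G a 0 1, ⟨hθ, integrable_log_psi hδ ha0 hw hS, ?_⟩,
    Real.log (a * δ), fun x => Real.log_le_log (by positivity) ?_⟩
  · simpa only [pi0_equalMix, psi_equalMix] using hsmall.le
  · simpa using pi0_mul_le_psi hw hS δ x

/-- Lemma 3: for any probability measure P on ℝ^p, the supremum of the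
population pseudo-log-likelihood over Θ_G is > -∞: there is θ ∈ Θ_G whose
pseudo-log-density is bounded below. -/
theorem stmt12 {p G : ℕ} (hp : 0 < p) (hG : 0 < G)
    (P : Measure (Fin p → ℝ)) [IsProbabilityMeasure P]
    (δ γ πmax : ℝ) (hδ : 0 < δ) (hγ : 1 ≤ γ) (hπ0 : 0 < πmax) (hπ1 : πmax < 1) :
    ∃ θ ∈ ThetaG G P δ γ πmax, ∃ b : ℝ, ∀ x, b ≤ Real.log (psi δ θ x) :=
  stmt12_general hp hG P δ γ πmax hδ hγ hπ0
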